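/- There exists n₀ such that for all n ≥ n₀, all integers l ≥ θ_n/2, and all x, y ∈ V_n^{ev}, one has | (Q_n^{ev})^l(x,y) - 2^{-(n-1)} | ≤ 2^{-n}·2^{-(n-1)}; the same estimate holds with the odd chain Q_n^{od} on V_n^{od}. -/

import Mathlib

open Filter

/-- The vertex set of the `n`-dimensional discrete cube. -/
abbrev V (n : ℕ) := Fin n → Bool

/-- Vertices at even Hamming distance from `(1,…,1)`. -/
abbrev Vev (n : ℕ) := {x : V n // Even (hammingDist x (fun _ => true))}

/-- Vertices at odd Hamming distance from `(1,…,1)`. -/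
abbrev Vod (n : ℕ) := {x : V n // ¬ Even (hammingDist x (fun _ => true))}

/-- The two-step even chain: `2/n²` at Hamming distance 2, `1/n` on the diagonal. -/
noncomputable def Qev (n : ℕ) : Matrix (Vev n) (Vev n) ℝ :=
  fun x y => if hammingDist x.1 y.1 = 2 then 2 / (n : ℝ) ^ 2
    else if x = y then (n : ℝ)⁻¹ else 0

/-- The two-step odd chain: `2/n²` at Hamming distance 2, `1/n` on the diagonal. -/
noncomputable def Qod (n : ℕ) : Matrix (Vod n) (Vod n) ℝ :=
  fun x y => if hammingDist x.1 y.1 = 2 then 2 / (n : ℝ) ^ 2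
    else if x = y then (n : ℝ)⁻¹ else 0

/-- `θ_n = 2⌈(3/2)(n-1) log 2 / |log(1 - 2/n)|⌉`. -/
noncomputable def θ (n : ℕ) : ℕ :=
  2 * ⌈(3 / 2 : ℝ) * ((n : ℝ) - 1) * Real.log 2 / |Real.log (1 - 2 / (n : ℝ))|⌉₊

/-! The simple random walk `P` on the cube `{0,1}^ι` (`n = |ι|`) is diagonalised by the Walsh
characters `χ_S(x, y) = ∏_{i ∈ S} (-1)^[x i ≠ y i]`, with eigenvalues `1 - 2|S|/n`, so that
`P^m(x, y) = 2^{-n} ∑_S (1 - 2|S|/n)^m χ_S(x, y)`. The chains `Q^{ev}` and `Q^{od}` are `P²`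
restricted to a parity class, which `P²` never leaves, hence `(Q^∘)^l(x, y) = P^{2l}(x, y)`.
For `x, y` at even distance the terms `S = ∅` and `S = univ` contribute `2^{-(n-1)}`, and each
of the other terms is at most `(1 - 2/n)^{2l} ≤ 2^{-3(n-1)}` once `l ≥ θ_n / 2`. -/

open Finset

namespace Matrix

theorem submatrix_val_pow {α R : Type*} [Fintype α] [DecidableEq α] [Semiring R]
    (p : α → Prop) [DecidablePred p] (M : Matrix α α R)
    (hM : ∀ z y, ¬ p z → p y → M z y = 0) (k : ℕ) :
    (M.submatrix Subtype.val Subtype.val : Matrix {a // p a} {a // p a} R) ^ k =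
      (M ^ k).submatrix Subtype.val Subtype.val := by
  induction k with
  | zero => ext x y; simp [one_apply, Subtype.ext_iff]
  | succ k ih =>
    ext x y
    rw [pow_succ, pow_succ, ih, mul_apply, submatrix_apply, mul_apply,
      ← Fintype.sum_subtype_add_sum_subtype p]
    have hout : ∀ z : {a // ¬ p a}, (M ^ k) x z * M z y = 0 := fun z => by
      rw [hM _ _ z.2 y.2, mul_zero]
    simp [hout]

theorem pow_mulVec_eq_pow_smul {α R : Type*} [Fintype α] [DecidableEq α] [CommSemiring R]
    {M : Matrix α α R} {v : α → R} {c : R} (h : M *ᵥ v = c • v) (k : ℕ) :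
    (M ^ k) *ᵥ v = c ^ k • v := by
  induction k with
  | zero => simp
  | succ k ih => rw [pow_succ', ← mulVec_mulVec, ih, mulVec_smul, h, smul_smul, pow_succ]

end Matrix

namespace Hypercube

open Matrix

variable {ι : Type*}

noncomputable def walsh (S : Finset ι) (x y : ι → Bool) : ℝ :=
  ∏ i ∈ S, if x i = y i then 1 else -1

theorem walsh_mul_walsh (S : Finset ι) (x y z : ι → Bool) :
    walsh S x y * walsh S y z = walsh S x z := by
  rw [walsh, walsh, walsh, ← prod_mul_distrib]
  refine prod_congr rfl fun i _ => ?_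
  cases x i <;> cases y i <;> cases z i <;> norm_num

theorem walsh_empty (x y : ι → Bool) : walsh ∅ x y = 1 := prod_empty

theorem abs_walsh (S : Finset ι) (x y : ι → Bool) : |walsh S x y| = 1 := by
  rw [walsh, abs_prod]
  exact prod_eq_one fun i _ => by split_ifs <;> simp

section Flip

variable [DecidableEq ι]

def flipCoord (i : ι) (x : ι → Bool) : ι → Bool := Function.update x i (!x i)

theorem flipCoord_apply (i : ι) (x : ι → Bool) (j : ι) :
    flipCoord i x j = if j = i then !x i else x j :=
  Function.update_apply x i _ j

theorem flipCoord_flipCoord (i : ι) (x : ι → Bool) : flipCoord i (flipCoord i x) = x := by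
  ext j
  by_cases hj : j = i <;> simp [flipCoord_apply, hj]

theorem flipCoord_injective (x : ι → Bool) : Function.Injective (flipCoord · x) := by
  intro i j hij
  by_contra hne
  have := congrFun hij i
  simp [flipCoord_apply, hne] at this

theorem walsh_flipCoord (S : Finset ι) (i : ι) (x y : ι → Bool) :
    walsh S (flipCoord i x) y = (if i ∈ S then -1 else 1) * walsh S x y := by
  have hfactor : ∀ j, (if flipCoord i x j = y j then (1 : ℝ) else -1) =
      (if j = i then -1 else 1) * (if x j = y j then 1 else -1) := by
    intro j
    by_cases hj : j = i
    · subst hj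
      rw [flipCoord_apply, if_pos rfl, if_pos rfl]
      cases x j <;> cases y j <;> norm_num
    · simp [flipCoord_apply, hj]
  simp only [walsh, hfactor, prod_mul_distrib, prod_ite_eq']

end Flip

variable [Fintype ι]

noncomputable def walk (ι : Type*) [Fintype ι] : Matrix (ι → Bool) (ι → Bool) ℝ :=
  fun x y => if hammingDist x y = 1 then (Fintype.card ι : ℝ)⁻¹ else 0

noncomputable def walshEigenvalue (S : Finset ι) : ℝ := 1 - 2 * #S / Fintype.card ι

theorem walsh_univ (x y : ι → Bool) : walsh univ x y = (-1) ^ hammingDist x y := by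
  rw [walsh, prod_ite, prod_const_one, one_mul, prod_const]
  rfl

theorem even_hammingDist_iff (x y z : ι → Bool) :
    Even (hammingDist x z) ↔ (Even (hammingDist x y) ↔ Even (hammingDist y z)) := by
  have h := walsh_mul_walsh univ x y z
  simp only [walsh_univ] at h
  simp only [← neg_one_pow_eq_one_iff_even (R := ℝ) (by norm_num), ← h]
  rcases neg_one_pow_eq_or ℝ (hammingDist x y) with hxy | hxy <;>
  rcases neg_one_pow_eq_or ℝ (hammingDist y z) with hyz | hyz <;>
  norm_num [hxy, hyz]

theorem walshEigenvalue_empty : walshEigenvalue (∅ : Finset ι) = 1 := by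
  simp [walshEigenvalue]

theorem walshEigenvalue_univ [Nonempty ι] : walshEigenvalue (univ : Finset ι) = -1 := by
  have hcard : (Fintype.card ι : ℝ) ≠ 0 := by positivity
  rw [walshEigenvalue, card_univ]
  field_simp
  ring

theorem abs_walshEigenvalue_le {S : Finset ι} (h₀ : S ≠ ∅) (h₁ : S ≠ univ) :
    |walshEigenvalue S| ≤ 1 - 2 / Fintype.card ι := by
  have hpos : 0 < #S := card_pos.mpr (nonempty_iff_ne_empty.mpr h₀)
  have hlt : #S < Fintype.card ι := (card_lt_iff_ne_univ S).mpr h₁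
  have hs₀ : (1 : ℝ) ≤ #S := by exact_mod_cast hpos
  have hs₁ : (#S : ℝ) + 1 ≤ Fintype.card ι := by exact_mod_cast hlt
  have hN : (0 : ℝ) < Fintype.card ι := by linarith
  have hlow : 2 / (Fintype.card ι : ℝ) ≤ 2 * #S / Fintype.card ι := by gcongr; linarith
  have hhigh : 2 * #S / (Fintype.card ι : ℝ) + 2 / Fintype.card ι ≤ 2 := by
    rw [← add_div, div_le_iff₀ hN]
    linarith
  rw [walshEigenvalue, abs_le]
  constructor <;> linarith

theorem sum_walsh (x y : ι → Bool) :
    ∑ S : Finset ι, walsh S x y = if x = y then 2 ^ Fintype.card ι else 0 := by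
  simp only [walsh]
  rw [← powerset_univ, ← prod_add_one]
  split_ifs with hxy
  · simp only [hxy, if_true, prod_const, card_univ]
    norm_num
  · obtain ⟨i, hi⟩ := Function.ne_iff.mp hxy
    exact prod_eq_zero (mem_univ i) (by simp [hi])

section Walk

variable [DecidableEq ι]

theorem hammingDist_flipCoord_of_eq {i : ι} {x y : ι → Bool} (h : x i = y i) :
    hammingDist (flipCoord i x) y = hammingDist x y + 1 := by
  have : filter (fun j => flipCoord i x j ≠ y j) univ =
      insert i (filter (fun j => x j ≠ y j) univ) := by
    ext j
    by_cases hj : j = i <;> simp [flipCoord_apply, hj, h]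
  rw [hammingDist, hammingDist, this, card_insert_of_notMem (by simp [h])]

theorem hammingDist_flipCoord_of_ne {i : ι} {x y : ι → Bool} (h : x i ≠ y i) :
    hammingDist (flipCoord i x) y + 1 = hammingDist x y := by
  have h' : flipCoord i x i = y i := by
    rw [flipCoord_apply, if_pos rfl]
    revert h
    cases x i <;> cases y i <;> decide
  simpa [flipCoord_flipCoord] using (hammingDist_flipCoord_of_eq h').symm

theorem hammingDist_eq_one_iff {x z : ι → Bool} :
    hammingDist x z = 1 ↔ ∃ i, flipCoord i x = z := by
  constructor
  · intro h
    obtain ⟨i, hi⟩ := card_eq_one.mp h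
    refine ⟨i, funext fun j => ?_⟩
    have hj : x j ≠ z j ↔ j = i := by simpa using congrArg (j ∈ ·) hi
    by_cases hji : j = i
    · subst hji
      have hne : x j ≠ z j := hj.2 rfl
      rw [flipCoord_apply, if_pos rfl]
      revert hne
      cases x j <;> cases z j <;> decide
    · rw [flipCoord_apply, if_neg hji]
      exact not_not.mp (mt hj.1 hji)
  · rintro ⟨i, rfl⟩
    rw [hammingDist_comm, hammingDist_flipCoord_of_eq rfl, hammingDist_self]

theorem walk_mulVec (v : (ι → Bool) → ℝ) (x : ι → Bool) :
    (walk ι *ᵥ v) x = (Fintype.card ι : ℝ)⁻¹ * ∑ i, v (flipCoord i x) := by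
  have hnbr : ({z | hammingDist x z = 1} : Finset (ι → Bool)) = univ.image (flipCoord · x) := by
    ext z
    simp [hammingDist_eq_one_iff]
  simp only [mulVec, dotProduct, walk, ite_mul, zero_mul]
  rw [← sum_filter, hnbr, sum_image fun i _ j _ h => flipCoord_injective x h, mul_sum]

theorem card_filter_hammingDist_flipCoord_eq_one (x y : ι → Bool) :
    #{i | hammingDist (flipCoord i x) y = 1} =
      if hammingDist x y = 2 then 2 else if x = y then Fintype.card ι else 0 := by
  have key : ∀ i, hammingDist (flipCoord i x) y = 1 ↔
      (x i = y i ∧ hammingDist x y = 0) ∨ (x i ≠ y i ∧ hammingDist x y = 2) := by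
    intro i
    by_cases h : x i = y i
    · have := hammingDist_flipCoord_of_eq h
      simp only [h, true_and, ne_eq, not_true, false_and, or_false]
      omega
    · have := hammingDist_flipCoord_of_ne h
      simp only [h, false_and, ne_eq, not_false_eq_true, true_and, false_or]
      omega
  simp only [key]
  split_ifs with h2 hxy
  · simp only [h2, OfNat.ofNat_ne_zero, and_false, and_true, false_or]
    exact h2
  · subst hxy
    simp
  · rw [card_eq_zero, filter_eq_empty_iff]
    simp [h2, hxy]

theorem walk_mul_self_apply (x y : ι → Bool) :
    (walk ι * walk ι) x y = if hammingDist x y = 2 then 2 / (Fintype.card ι : ℝ) ^ 2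
      else if x = y then (Fintype.card ι : ℝ)⁻¹ else 0 := by
  rw [mul_apply', ← mulVec, walk_mulVec]
  simp only [walk]
  rw [sum_ite, sum_const_zero, add_zero, sum_const, nsmul_eq_mul,
    card_filter_hammingDist_flipCoord_eq_one]
  split_ifs <;> field_simp <;> ring

theorem walk_mulVec_walsh [Nonempty ι] (S : Finset ι) (y : ι → Bool) :
    walk ι *ᵥ (walsh S · y) = walshEigenvalue S • (walsh S · y) := by
  have hcard : (Fintype.card ι : ℝ) ≠ 0 := by positivity
  ext x
  have hsign : ∑ i : ι, (if i ∈ S then (-1 : ℝ) else 1) = Fintype.card ι - 2 * #S := by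
    simp only [sum_ite, subset_univ, filter_mem_eq_of_subset, sum_neg_distrib, sum_const,
      nsmul_eq_mul, mul_one, filter_not, card_univ_sdiff, Nat.cast_sub (card_le_univ S)]
    ring
  rw [walk_mulVec, Pi.smul_apply, smul_eq_mul, walshEigenvalue]
  simp only [walsh_flipCoord, ← sum_mul, hsign]
  field_simp

theorem walk_pow_apply [Nonempty ι] (m : ℕ) (x y : ι → Bool) :
    (walk ι ^ m) x y =
      (2 ^ Fintype.card ι : ℝ)⁻¹ * ∑ S, walshEigenvalue S ^ m * walsh S x y := by
  have hsingle :
      Pi.single y (1 : ℝ) = (2 ^ Fintype.card ι : ℝ)⁻¹ • ∑ S, (walsh S · y) := by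
    ext z
    simp [Finset.sum_apply, sum_walsh, Pi.single_apply]
  have h := congrFun (congrArg (walk ι ^ m *ᵥ ·) hsingle) x
  simpa [mulVec_smul, mulVec_sum, pow_mulVec_eq_pow_smul (walk_mulVec_walsh _ y)] using h

theorem abs_walk_pow_sub_le [Nonempty ι] {x y : ι → Bool}
    (hxy : Even (hammingDist x y)) (l : ℕ) :
    |(walk ι ^ (2 * l)) x y - 2 / 2 ^ Fintype.card ι| ≤
      (1 - 2 / Fintype.card ι) ^ (2 * l) := by
  set F : Finset ι → ℝ := fun S => walshEigenvalue S ^ (2 * l) * walsh S x y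
  set r : ℝ := 1 - 2 / Fintype.card ι
  have hsplit : ∑ S, F S = 2 + ∑ S ∈ {∅, univ}ᶜ, F S := by
    rw [← sum_add_sum_compl {∅, univ}, sum_pair univ_nonempty.ne_empty.symm]
    simp only [F, walsh_empty, walshEigenvalue_empty, walshEigenvalue_univ, walsh_univ,
      hxy.neg_one_pow, Even.neg_one_pow ⟨l, two_mul l⟩, one_pow, mul_one]
    norm_num
  have hterm : ∀ S ∈ ({∅, univ}ᶜ : Finset (Finset ι)), |F S| ≤ r ^ (2 * l) := by
    intro S hS
    simp only [mem_compl, mem_insert, mem_singleton, not_or] at hS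
    rw [abs_mul, abs_walsh, mul_one, abs_pow]
    exact pow_le_pow_left₀ (abs_nonneg _) (abs_walshEigenvalue_le hS.1 hS.2) _
  have hrest : |∑ S ∈ {∅, univ}ᶜ, F S| ≤ 2 ^ Fintype.card ι * r ^ (2 * l) :=
    calc |∑ S ∈ {∅, univ}ᶜ, F S| ≤ ∑ S ∈ {∅, univ}ᶜ, |F S| :=
          abs_sum_le_sum_abs _ _
      _ ≤ #({∅, univ}ᶜ : Finset (Finset ι)) * r ^ (2 * l) := by
        simpa using sum_le_card_nsmul _ _ _ hterm
      _ ≤ 2 ^ Fintype.card ι * r ^ (2 * l) := by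
        have : 0 ≤ r ^ (2 * l) := by rw [pow_mul]; positivity
        gcongr
        exact_mod_cast (card_le_univ _).trans (Fintype.card_finset (α := ι)).le
  rw [walk_pow_apply, hsplit, mul_add, ← div_eq_inv_mul, add_sub_cancel_left, abs_mul,
    abs_inv, abs_pow, abs_two]
  calc (2 ^ Fintype.card ι : ℝ)⁻¹ * |∑ S ∈ {∅, univ}ᶜ, F S|
      ≤ (2 ^ Fintype.card ι : ℝ)⁻¹ * (2 ^ Fintype.card ι * r ^ (2 * l)) := by gcongr
    _ = r ^ (2 * l) := by field_simp

theorem walk_sq_submatrix_pow (p : (ι → Bool) → Prop) [DecidablePred p]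
    (hp : ∀ x y, p y → (p x ↔ Even (hammingDist x y))) (l : ℕ) :
    ((walk ι ^ 2).submatrix Subtype.val Subtype.val : Matrix {x // p x} {x // p x} ℝ) ^ l =
      (walk ι ^ (2 * l)).submatrix Subtype.val Subtype.val := by
  rw [submatrix_val_pow, pow_mul]
  intro z y hz hy
  rw [sq, walk_mul_self_apply, if_neg, if_neg]
  · rintro rfl
    exact hz hy
  · intro h
    exact hz ((hp z y hy).2 (h ▸ even_two))

end Walk

end Hypercube

open Hypercube

theorem one_sub_two_div_pow_le_of_theta {n l : ℕ} (hn : 3 ≤ n) (hl : θ n / 2 ≤ l) :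
    (1 - 2 / (n : ℝ)) ^ (2 * l) ≤ ((2 : ℝ) ^ n)⁻¹ * ((2 : ℝ) ^ (n - 1))⁻¹ := by
  have hnR : (3 : ℝ) ≤ n := by exact_mod_cast hn
  have hr₀ : 0 < 1 - 2 / (n : ℝ) := by
    rw [sub_pos, div_lt_one (by linarith)]
    linarith
  have hr₁ : 1 - 2 / (n : ℝ) < 1 := by
    have : 0 < 2 / (n : ℝ) := by positivity
    linarith
  have hlog : Real.log (1 - 2 / n) < 0 := Real.log_neg hr₀ hr₁
  have hceil : (3 / 2 : ℝ) * ((n : ℝ) - 1) * Real.log 2 / |Real.log (1 - 2 / n)| ≤ l := by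
    rw [θ, Nat.mul_div_cancel_left _ two_pos] at hl
    exact (Nat.le_ceil _).trans (by exact_mod_cast hl)
  rw [abs_of_neg hlog, div_le_iff₀ (neg_pos.mpr hlog)] at hceil
  have hn₁ : ((n - 1 : ℕ) : ℝ) = n - 1 := by
    rw [Nat.cast_sub (by omega), Nat.cast_one]
  have hlog2 : (2 * n - 1 : ℝ) * Real.log 2 ≤ 3 * (n - 1) * Real.log 2 :=
    mul_le_mul_of_nonneg_right (by linarith) (Real.log_pos one_lt_two).le
  rw [← Real.log_le_log_iff (by positivity) (by positivity), Real.log_pow,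
    Real.log_mul (by positivity) (by positivity), Real.log_inv, Real.log_inv, Real.log_pow,
    Real.log_pow, hn₁]
  push_cast
  nlinarith

theorem abs_walk_pow_sub_le_of_theta {n l : ℕ} (hn : 3 ≤ n) (hl : θ n / 2 ≤ l) {x y : V n}
    (hxy : Even (hammingDist x y)) :
    |(walk (Fin n) ^ (2 * l)) x y - ((2 : ℝ) ^ (n - 1))⁻¹| ≤
      ((2 : ℝ) ^ n)⁻¹ * ((2 : ℝ) ^ (n - 1))⁻¹ := by
  have : Nonempty (Fin n) := ⟨⟨0, by omega⟩⟩
  have hhalf : ((2 : ℝ) ^ (n - 1))⁻¹ = 2 / 2 ^ n := by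
    rw [← Nat.sub_add_cancel (by omega : 1 ≤ n), pow_succ, Nat.add_sub_cancel]
    field_simp
  have h := abs_walk_pow_sub_le hxy l
  rw [Fintype.card_fin, ← hhalf] at h
  exact h.trans (one_sub_two_div_pow_le_of_theta hn hl)

theorem Qev_eq_submatrix (n : ℕ) :
    Qev n = (walk (Fin n) ^ 2).submatrix Subtype.val Subtype.val := by
  ext x y
  simp [Qev, sq, walk_mul_self_apply, Subtype.ext_iff]

theorem Qod_eq_submatrix (n : ℕ) :
    Qod n = (walk (Fin n) ^ 2).submatrix Subtype.val Subtype.val := by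
  ext x y
  simp [Qod, sq, walk_mul_self_apply, Subtype.ext_iff]

/-- For all large `n`, all `l ≥ θ_n/2` and all `x, y` in `V_n^{ev}`,
`|(Q_n^{ev})^l(x,y) - 2^{-(n-1)}| ≤ 2^{-n} 2^{-(n-1)}`, and likewise for the odd chain. -/
theorem even_odd_chain_mixing : ∃ n₀ : ℕ, ∀ n ≥ n₀, ∀ l : ℕ, θ n / 2 ≤ l →
    (∀ x y : Vev n,
      |(Qev n ^ l) x y - ((2 : ℝ) ^ (n - 1))⁻¹| ≤ ((2 : ℝ) ^ n)⁻¹ * ((2 : ℝ) ^ (n - 1))⁻¹) ∧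
    (∀ x y : Vod n,
      |(Qod n ^ l) x y - ((2 : ℝ) ^ (n - 1))⁻¹| ≤ ((2 : ℝ) ^ n)⁻¹ * ((2 : ℝ) ^ (n - 1))⁻¹) := by
  refine ⟨3, fun n hn l hl => ⟨fun x y => ?_, fun x y => ?_⟩⟩
  · have hp : ∀ z y : V n, Even (hammingDist y fun _ => true) →
        (Even (hammingDist z fun _ => true) ↔ Even (hammingDist z y)) := fun z y _ => by
      have := even_hammingDist_iff z y fun _ => true
      tauto
    rw [Qev_eq_submatrix, walk_sq_submatrix_pow _ hp, Matrix.submatrix_apply]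
    exact abs_walk_pow_sub_le_of_theta hn hl ((hp x y y.2).1 x.2)
  · have hp : ∀ z y : V n, ¬ Even (hammingDist y fun _ => true) →
        (¬ Even (hammingDist z fun _ => true) ↔ Even (hammingDist z y)) := fun z y _ => by
      have := even_hammingDist_iff z y fun _ => true
      tauto
    rw [Qod_eq_submatrix, walk_sq_submatrix_pow _ hp, Matrix.submatrix_apply]
    exact abs_walk_pow_sub_le_of_theta hn hl ((hp x y y.2).1 x.2)
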